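/- Let g : ℝⁿ → ℝ be convex and twice continuously differentiable, and let φ : ℝⁿ → ℝ ∪ {+∞} be proper, lower semicontinuous and convex. Suppose the set X := argmin(g + φ) is nonempty. Then ∇g(x) = ∇g(y) for all x, y ∈ X; moreover, letting v = ∇g(x₀) for some x₀ ∈ X, one has X = {x ∈ ℝⁿ : ∇g(x) = v and −v ∈ ∂φ(x)}, where ∂φ(x) = {ξ ∈ ℝⁿ : φ(y) ≥ φ(x) + ⟨ξ, y − x⟩ for all y ∈ ℝⁿ} is the convex subdifferential of φ at x. -/

import Mathlib

/-!
At a minimiser `x` of `g + φ`, comparing `x` with the points of a segment `[x, y]` and using the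
convexity of `φ` bounds the difference quotients of `g` from below by `φ x - φ y`; in the limit this
is the optimality condition `-∇g(x) ∈ ∂φ(x)`. Conversely, this condition added to the gradient
inequality `g y ≥ g x + ⟨∇g(x), y - x⟩` of the convex function `g` shows that `x` is a minimiser.
For two minimisers `x, y` these two inequalities must be equalities, so the tangent plane of `g`
at `x` also supports `g` at `y`, and differentiability of `g` at `y` forces `∇g(y) = ∇g(x)`.
-/

open scoped BigOperators

/-- The convex subdifferential of an extended-real-valued function `φ` at `x`:
`∂φ(x) = {ξ : φ(y) ≥ φ(x) + ⟨ξ, y − x⟩ for all y}`. -/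
def ESubdiff {n : ℕ} (φ : EuclideanSpace ℝ (Fin n) → EReal)
    (x : EuclideanSpace ℝ (Fin n)) : Set (EuclideanSpace ℝ (Fin n)) :=
  {ξ | ∀ y, φ x + (((inner ℝ ξ (y - x) : ℝ)) : EReal) ≤ φ y}

open Filter Set Topology
open scoped RealInnerProductSpace Gradient

section Gradient

variable {E : Type*} [NormedAddCommGroup E] [InnerProductSpace ℝ E] [CompleteSpace E]
  {f : E → ℝ} {x y d : E} {c : ℝ}

theorem DifferentiableAt.tendsto_slope_inner_gradient (hf : DifferentiableAt ℝ f x) (d : E) :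
    Tendsto (fun t : ℝ ↦ t⁻¹ * (f (x + t • d) - f x)) (𝓝[>] 0) (𝓝 ⟪∇ f x, d⟫) := by
  rw [inner_gradient_left]
  exact (hf.hasFDerivAt.hasLineDerivAt d).tendsto_slope_zero_right

theorem DifferentiableAt.le_inner_gradient (hf : DifferentiableAt ℝ f x)
    (h : ∀ᶠ t in 𝓝[>] (0 : ℝ), c * t ≤ f (x + t • d) - f x) : c ≤ ⟪∇ f x, d⟫ := by
  refine ge_of_tendsto (hf.tendsto_slope_inner_gradient d) ?_
  filter_upwards [h, self_mem_nhdsWithin] with t ht (htpos : 0 < t)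
  rwa [le_inv_mul_iff₀ htpos, mul_comm]

theorem DifferentiableAt.inner_gradient_le (hf : DifferentiableAt ℝ f x)
    (h : ∀ᶠ t in 𝓝[>] (0 : ℝ), f (x + t • d) - f x ≤ c * t) : ⟪∇ f x, d⟫ ≤ c := by
  refine le_of_tendsto (hf.tendsto_slope_inner_gradient d) ?_
  filter_upwards [h, self_mem_nhdsWithin] with t ht (htpos : 0 < t)
  rwa [inv_mul_le_iff₀ htpos, mul_comm]

theorem DifferentiableAt.gradient_eq_of_forall_le (hf : DifferentiableAt ℝ f x) {v : E}
    (h : ∀ y, f x + ⟪v, y - x⟫ ≤ f y) : ∇ f x = v := by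
  have hle : ∀ d, ⟪v, d⟫ ≤ ⟪∇ f x, d⟫ := fun d ↦ hf.le_inner_gradient <|
    Eventually.of_forall fun t ↦ by
      have := h (x + t • d)
      rw [add_sub_cancel_left, inner_smul_right] at this
      linarith
  refine ext_inner_right ℝ fun d ↦ le_antisymm ?_ (hle d)
  simpa only [inner_neg_right, neg_le_neg_iff] using hle (-d)

theorem ConvexOn.add_inner_gradient_le {s : Set E} (hconv : ConvexOn ℝ s f)
    (hf : DifferentiableAt ℝ f x) (hx : x ∈ s) (hy : y ∈ s) :
    f x + ⟪∇ f x, y - x⟫ ≤ f y := by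
  suffices ⟪∇ f x, y - x⟫ ≤ f y - f x by linarith
  refine hf.inner_gradient_le ?_
  filter_upwards [Ioc_mem_nhdsGT (zero_lt_one' ℝ)] with t ⟨ht₀, ht₁⟩
  have hseg := hconv.2 hy hx ht₀.le (sub_nonneg.2 ht₁) (add_sub_cancel t 1)
  rw [show t • y + (1 - t) • x = x + t • (y - x) by module, smul_eq_mul, smul_eq_mul] at hseg
  linarith

theorem ConvexOn.gradient_eq_of_eq_add_inner (hconv : ConvexOn ℝ univ f)
    (hfx : DifferentiableAt ℝ f x) (hfy : DifferentiableAt ℝ f y)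
    (h : f y = f x + ⟪∇ f x, y - x⟫) : ∇ f y = ∇ f x := by
  refine hfy.gradient_eq_of_forall_le fun z ↦ ?_
  have hz := hconv.add_inner_gradient_le hfx (mem_univ x) (mem_univ z)
  rw [show z - x = (z - y) + (y - x) by abel, inner_add_right] at hz
  linarith

end Gradient

section Subdifferential

variable {n : ℕ} {g : EuclideanSpace ℝ (Fin n) → ℝ} {φ : EuclideanSpace ℝ (Fin n) → EReal}
  {x : EuclideanSpace ℝ (Fin n)}

theorem ne_top_of_forall_add_le (hmin : ∀ y, (g x : EReal) + φ x ≤ g y + φ y)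
    (hφ : ∃ y, φ y ≠ ⊤) : φ x ≠ ⊤ := by
  obtain ⟨y, hy⟩ := hφ
  intro hx
  have := hmin y
  rw [hx, EReal.coe_add_top, top_le_iff] at this
  exact (EReal.add_lt_top (EReal.coe_ne_top _) hy).ne this

theorem neg_gradient_mem_eSubdiff_of_forall_add_le (hg : DifferentiableAt ℝ g x)
    (hφconv : ∀ x y : EuclideanSpace ℝ (Fin n), ∀ t : ℝ, 0 ≤ t → t ≤ 1 →
      φ (t • x + (1 - t) • y) ≤ ((t : ℝ) : EReal) * φ x + (((1 - t : ℝ)) : EReal) * φ y)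
    (hbot : ∀ y, φ y ≠ ⊥) (htop : φ x ≠ ⊤) (hmin : ∀ y, (g x : EReal) + φ x ≤ g y + φ y) :
    -∇ g x ∈ ESubdiff φ x := by
  intro y
  by_cases hy : φ y = ⊤
  · rw [hy]; exact le_top
  obtain ⟨r, hr⟩ : ∃ r : ℝ, φ x = r := ⟨_, (EReal.coe_toReal htop (hbot x)).symm⟩
  obtain ⟨s, hs⟩ : ∃ s : ℝ, φ y = s := ⟨_, (EReal.coe_toReal hy (hbot y)).symm⟩
  suffices r - s ≤ ⟪∇ g x, y - x⟫ by
    rw [hr, hs, inner_neg_left, ← EReal.coe_add, EReal.coe_le_coe_iff]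
    linarith
  refine hg.le_inner_gradient ?_
  filter_upwards [Ioc_mem_nhdsGT (zero_lt_one' ℝ)] with t ⟨ht₀, ht₁⟩
  have hseg := hφconv y x t ht₀.le ht₁
  rw [show t • y + (1 - t) • x = x + t • (y - x) by module, hr, hs, ← EReal.coe_mul,
    ← EReal.coe_mul, ← EReal.coe_add] at hseg
  have hle := (hmin (x + t • (y - x))).trans (add_le_add_right hseg _)
  rw [hr, ← EReal.coe_add, ← EReal.coe_add, EReal.coe_le_coe_iff] at hle
  linarith

theorem forall_add_le_of_neg_gradient_mem_eSubdiff (hconv : ConvexOn ℝ univ g)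
    (hg : DifferentiableAt ℝ g x) (hsub : -∇ g x ∈ ESubdiff φ x) (y : EuclideanSpace ℝ (Fin n)) :
    (g x : EReal) + φ x ≤ g y + φ y := by
  have hφ := hsub y
  rw [inner_neg_left] at hφ
  calc (g x : EReal) + φ x
      = ((g x + ⟪∇ g x, y - x⟫ : ℝ) : EReal) + (φ x + ((-⟪∇ g x, y - x⟫ : ℝ) : EReal)) := by
        rw [EReal.coe_add, EReal.coe_neg, add_add_add_comm, ← EReal.coe_neg, ← EReal.coe_add,
          add_neg_cancel, EReal.coe_zero, add_zero]
    _ ≤ g y + φ y := add_le_add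
        (EReal.coe_le_coe_iff.2 (hconv.add_inner_gradient_le hg (mem_univ x) (mem_univ y))) hφ

/-- If `-∇g(x) ∈ ∂φ(x)` with `φ x` finite, then every `y` at which `g + φ` is no larger lies on
the tangent plane of `g` at `x`, so `∇g(y) = ∇g(x)`. -/
theorem gradient_eq_of_neg_gradient_mem_eSubdiff (hconv : ConvexOn ℝ univ g)
    (hg : Differentiable ℝ g) (hbot : φ x ≠ ⊥) (htop : φ x ≠ ⊤) (hsub : -∇ g x ∈ ESubdiff φ x)
    {y : EuclideanSpace ℝ (Fin n)} (hy : (g y : EReal) + φ y ≤ g x + φ x) : ∇ g y = ∇ g x := by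
  obtain ⟨r, hr⟩ : ∃ r : ℝ, φ x = r := ⟨_, (EReal.coe_toReal htop hbot).symm⟩
  have hφ := hsub y
  rw [hr, inner_neg_left] at hφ
  have hle := (add_le_add_right hφ (g y : EReal)).trans hy
  rw [hr, ← EReal.coe_add, ← EReal.coe_add, ← EReal.coe_add, EReal.coe_le_coe_iff] at hle
  have hge := hconv.add_inner_gradient_le (hg x) (mem_univ x) (mem_univ y)
  exact hconv.gradient_eq_of_eq_add_inner (hg x) (hg y) (by linarith)

end Subdifferential

theorem stmt8 (n : ℕ)
    (g : EuclideanSpace ℝ (Fin n) → ℝ) (hgC : ContDiff ℝ 2 g)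
    (hgconv : ConvexOn ℝ Set.univ g)
    (φ : EuclideanSpace ℝ (Fin n) → EReal)
    (hproper : (∀ x, φ x ≠ ⊥) ∧ (∃ x, φ x ≠ ⊤))
    (hφconv : ∀ x y : EuclideanSpace ℝ (Fin n), ∀ t : ℝ, 0 ≤ t → t ≤ 1 →
      φ (t • x + (1 - t) • y) ≤ ((t : ℝ) : EReal) * φ x + (((1 - t : ℝ)) : EReal) * φ y)
    (X : Set (EuclideanSpace ℝ (Fin n)))
    (hX : X = {x | ∀ y, (g x : EReal) + φ x ≤ (g y : EReal) + φ y}) :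
    (∀ x ∈ X, ∀ y ∈ X, gradient g x = gradient g y) ∧
    (∀ x₀ ∈ X,
      X = {x | gradient g x = gradient g x₀ ∧ -(gradient g x₀) ∈ ESubdiff φ x}) := by
  have hg : Differentiable ℝ g := hgC.differentiable (by norm_num)
  have hmin : ∀ x ∈ X, ∀ y, (g x : EReal) + φ x ≤ g y + φ y := fun x hx ↦ by rwa [hX] at hx
  have htop : ∀ x ∈ X, φ x ≠ ⊤ := fun x hx ↦ ne_top_of_forall_add_le (hmin x hx) hproper.2
  have hsub : ∀ x ∈ X, -∇ g x ∈ ESubdiff φ x := fun x hx ↦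
    neg_gradient_mem_eSubdiff_of_forall_add_le (hg x) hφconv hproper.1 (htop x hx) (hmin x hx)
  have hconst : ∀ x ∈ X, ∀ y ∈ X, ∇ g x = ∇ g y := fun x hx y hy ↦
    (gradient_eq_of_neg_gradient_mem_eSubdiff hgconv hg (hproper.1 x) (htop x hx) (hsub x hx)
      (hmin y hy x)).symm
  refine ⟨hconst, fun x₀ hx₀ ↦ Set.ext fun x ↦ ⟨fun hx ↦ ?_, fun ⟨hgx, hsubx⟩ ↦ ?_⟩⟩
  · exact ⟨hconst x hx x₀ hx₀, hconst x hx x₀ hx₀ ▸ hsub x hx⟩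
  · rw [hX]
    exact forall_add_le_of_neg_gradient_mem_eSubdiff hgconv (hg x) (hgx ▸ hsubx)
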